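/- Strict weighted Mourre estimate implies LAP along special sequences (core step of Theorem 3.4): let I be an open interval, I' a closed subinterval, B, C bounded self-adjoint with C injective, and suppose that CBС⁻¹ is bounded and the strict weighted projected Mourre estimate P⊥ E_I(H) [H, iB] E_I(H) P⊥ ≥ P⊥ E_I(H) C² E_I(H) P⊥ holds. Then every special sequence (f_n, z_n) for H associated to (I', C) satisfying E_I(H) f_n = f_n for all n has mass zero. -/

import Mathlib

open scoped InnerProductSpace Topology

open Filter

/-! Write `(H - z) f = C g`. The commutator form `⟪f, [H, iB] f⟫ = -2 Im ⟪H f, B f⟫` splits into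
`-2 Im ⟪g, B₁ C f⟫`, at most `2 ‖B₁‖ ‖g‖ ‖C f‖`, and `2 Im z ⟪f, B f⟫`, at most
`2 ‖B‖ ‖g‖ ‖C f‖` because taking imaginary parts in `⟪f, C g⟫ = ⟪f, H f⟫ - z ‖f‖²` gives
`|Im z| ‖f‖² ≤ ‖C f‖ ‖g‖`. The Mourre estimate then yields
`‖C f_n‖² ≤ 2 (‖B₁‖ + ‖B‖) ‖g_n‖ ‖C f_n‖`, whose right-hand side tends to `0`. -/

theorem IsSelfAdjoint.isFormalAdjoint_self {𝕜 E : Type*} [RCLike 𝕜] [NormedAddCommGroup E]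
    [InnerProductSpace 𝕜 E] [CompleteSpace E] {A : E →ₗ.[𝕜] E} (hA : IsSelfAdjoint A) :
    A.IsFormalAdjoint A := by
  simpa only [LinearPMap.isSelfAdjoint_def.mp hA] using
    LinearPMap.adjoint_isFormalAdjoint hA.dense_domain

theorem LinearPMap.IsFormalAdjoint.im_inner_self_apply {𝕜 E : Type*} [RCLike 𝕜]
    [NormedAddCommGroup E] [InnerProductSpace 𝕜 E] {A : E →ₗ.[𝕜] E} (hA : A.IsFormalAdjoint A)
    (x : A.domain) : RCLike.im ⟪(x : E), A x⟫_𝕜 = 0 :=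
  RCLike.conj_eq_iff_im.mp <| by rw [inner_conj_symm, hA]

theorem eq_zero_of_tendsto_of_sq_le_mul {α : Type*} {l : Filter α} [l.NeBot] {a b : α → ℝ}
    {η K : ℝ} (ha : Tendsto a l (𝓝 η)) (hb : Tendsto b l (𝓝 0))
    (h : ∀ n, a n ^ 2 ≤ K * b n * a n) : η = 0 := by
  have hle : η ^ 2 ≤ K * 0 * η :=
    le_of_tendsto_of_tendsto' (ha.pow 2) ((hb.const_mul K).mul ha) h
  exact pow_eq_zero_iff two_ne_zero |>.mp (le_antisymm (by simpa using hle) (sq_nonneg η))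

section WeightedMourre

variable {ℋ : Type*} [NormedAddCommGroup ℋ] [InnerProductSpace ℂ ℋ]

theorem re_I_mul_inner_sub_inner (x y : ℋ) :
    (Complex.I * (⟪x, y⟫_ℂ - ⟪y, x⟫_ℂ)).re = -2 * (⟪x, y⟫_ℂ).im := by
  rw [← inner_conj_symm x y]
  simp only [Complex.mul_re, Complex.I_re, Complex.I_im, Complex.sub_re, Complex.sub_im,
    Complex.conj_re, Complex.conj_im]
  ring

theorem norm_inner_apply_le (T : ℋ →L[ℂ] ℋ) (x y : ℋ) : ‖⟪x, T y⟫_ℂ‖ ≤ ‖T‖ * ‖x‖ * ‖y‖ :=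
  calc ‖⟪x, T y⟫_ℂ‖ ≤ ‖x‖ * (‖T‖ * ‖y‖) :=
        (norm_inner_le_norm _ _).trans (by gcongr; exact T.le_opNorm y)
    _ = ‖T‖ * ‖x‖ * ‖y‖ := by ring

variable {B C B₁ : ℋ →L[ℂ] ℋ} {f h g : ℋ} {z : ℂ}

theorem abs_im_mul_norm_sq_le_of_eq_sub_smul (hC : (C : ℋ →ₗ[ℂ] ℋ).IsSymmetric)
    (hfh : (⟪f, h⟫_ℂ).im = 0) (hg : C g = h - z • f) : |z.im| * ‖f‖ ^ 2 ≤ ‖C f‖ * ‖g‖ := by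
  have him : (⟪C f, g⟫_ℂ).im = -(z.im * ‖f‖ ^ 2) := by
    rw [show ⟪C f, g⟫_ℂ = ⟪f, C g⟫_ℂ from hC f g, hg, inner_sub_right, inner_smul_right,
      inner_self_eq_norm_sq_to_K]
    simp only [Complex.coe_algebraMap, ← Complex.ofReal_pow, Complex.sub_im, Complex.mul_im, hfh,
      Complex.ofReal_re, Complex.ofReal_im]
    ring
  calc |z.im| * ‖f‖ ^ 2 = |(⟪C f, g⟫_ℂ).im| := by
        rw [him, abs_neg, abs_mul, abs_of_nonneg (sq_nonneg ‖f‖)]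
    _ ≤ ‖⟪C f, g⟫_ℂ‖ := Complex.abs_im_le_norm _
    _ ≤ ‖C f‖ * ‖g‖ := norm_inner_le_norm _ _

theorem im_inner_apply_eq_of_eq_sub_smul (hB : (B : ℋ →ₗ[ℂ] ℋ).IsSymmetric)
    (hC : (C : ℋ →ₗ[ℂ] ℋ).IsSymmetric) (hB₁ : ∀ x, B₁ (C x) = C (B x)) (hg : C g = h - z • f) :
    (⟪h, B f⟫_ℂ).im = (⟪g, B₁ (C f)⟫_ℂ).im - z.im * (⟪f, B f⟫_ℂ).re := by
  have hh : h = C g + z • f := by rw [hg]; abel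
  have ht : (⟪f, B f⟫_ℂ).im = 0 := hB.im_inner_self_apply f
  rw [hh, inner_add_left, inner_smul_left, show ⟪C g, B f⟫_ℂ = ⟪g, C (B f)⟫_ℂ from hC g _,
    ← hB₁]
  simp only [Complex.add_im, Complex.mul_im, Complex.conj_re, Complex.conj_im, ht]
  ring

theorem neg_two_mul_im_inner_apply_le_of_eq_sub_smul (hB : (B : ℋ →ₗ[ℂ] ℋ).IsSymmetric)
    (hC : (C : ℋ →ₗ[ℂ] ℋ).IsSymmetric) (hB₁ : ∀ x, B₁ (C x) = C (B x))
    (hfh : (⟪f, h⟫_ℂ).im = 0) (hg : C g = h - z • f) :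
    -2 * (⟪h, B f⟫_ℂ).im ≤ 2 * (‖B₁‖ + ‖B‖) * ‖g‖ * ‖C f‖ := by
  have hc : |(⟪g, B₁ (C f)⟫_ℂ).im| ≤ ‖B₁‖ * ‖g‖ * ‖C f‖ :=
    (Complex.abs_im_le_norm _).trans (norm_inner_apply_le B₁ g (C f))
  have ht : |z.im * (⟪f, B f⟫_ℂ).re| ≤ ‖B‖ * ‖g‖ * ‖C f‖ :=
    calc |z.im * (⟪f, B f⟫_ℂ).re| ≤ |z.im| * (‖B‖ * ‖f‖ * ‖f‖) := by
          rw [abs_mul]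
          exact mul_le_mul_of_nonneg_left
            ((Complex.abs_re_le_norm _).trans (norm_inner_apply_le B f f)) (abs_nonneg _)
      _ = ‖B‖ * (|z.im| * ‖f‖ ^ 2) := by ring
      _ ≤ ‖B‖ * (‖C f‖ * ‖g‖) := mul_le_mul_of_nonneg_left
          (abs_im_mul_norm_sq_le_of_eq_sub_smul hC hfh hg) (norm_nonneg _)
      _ = ‖B‖ * ‖g‖ * ‖C f‖ := by ring
  rw [im_inner_apply_eq_of_eq_sub_smul hB hC hB₁ hg]
  linarith [neg_abs_le (⟪g, B₁ (C f)⟫_ℂ).im, le_abs_self (z.im * (⟪f, B f⟫_ℂ).re)]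

end WeightedMourre

theorem stmt_19_general {ℋ : Type*} [NormedAddCommGroup ℋ] [InnerProductSpace ℂ ℋ] [CompleteSpace ℋ]
    (H : ℋ →ₗ.[ℂ] ℋ) (hH : IsSelfAdjoint H)
    -- `E = E_I(H)` and `P⊥ = 1 - P`, commuting orthogonal projections
    (E Pperp : ℋ →L[ℂ] ℋ)
    (B C : ℋ →L[ℂ] ℋ) (hBsa : IsSelfAdjoint B)
    (hCsa : IsSelfAdjoint C)
    (B₁ : ℋ →L[ℂ] ℋ) (hB₁ : ∀ x, B₁ (C x) = C (B x))
    -- strict weighted projected Mourre estimate `P⊥ E [H, iB] E P⊥ ≥ P⊥ E C² E P⊥`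
    (hMourre : ∀ u : H.domain, E u = (u : ℋ) → Pperp u = (u : ℋ) →
        ‖C u‖ ^ 2 ≤ (Complex.I * (⟪H u, B u⟫_ℂ - ⟪B u, H u⟫_ℂ)).re)
    -- a special sequence for `H` associated to `(I', C)`, localized by `E_I(H)`
    (f : ℕ → H.domain) (z : ℕ → ℂ) (g : ℕ → ℋ) (η : ℝ)
    (hPf : ∀ n, Pperp (f n) = (f n : ℋ))
    (hEf : ∀ n, E (f n) = (f n : ℋ))
    (hg : ∀ n, C (g n) = H (f n) - z n • (f n : ℋ))
    (hglim : Filter.Tendsto (fun n => ‖g n‖) Filter.atTop (𝓝 0))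
    (hmass : Filter.Tendsto (fun n => ‖C (f n)‖) Filter.atTop (𝓝 η)) :
    η = 0 := by
  refine eq_zero_of_tendsto_of_sq_le_mul (K := 2 * (‖B₁‖ + ‖B‖)) hmass hglim fun n ↦ ?_
  calc ‖C (f n)‖ ^ 2
      ≤ (Complex.I * (⟪H (f n), B (f n)⟫_ℂ - ⟪B (f n), H (f n)⟫_ℂ)).re :=
        hMourre (f n) (hEf n) (hPf n)
    _ = -2 * (⟪H (f n), B (f n)⟫_ℂ).im := re_I_mul_inner_sub_inner _ _
    _ ≤ 2 * (‖B₁‖ + ‖B‖) * ‖g n‖ * ‖C (f n)‖ :=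
        neg_two_mul_im_inner_apply_le_of_eq_sub_smul hBsa.isSymmetric hCsa.isSymmetric hB₁
          (hH.isFormalAdjoint_self.im_inner_self_apply (f n)) (hg n)

/-- core step of Theorem 3.4: let `I` be an open interval, `I'` a closed
subinterval, `B, C` bounded self-adjoint with `C` injective, `C B C⁻¹` bounded (extension
`B₁`, `B₁ ∘ C = C ∘ B`), and assume the strict weighted projected Mourre estimate
`P⊥ E_I(H) [H, iB] E_I(H) P⊥ ≥ P⊥ E_I(H) C² E_I(H) P⊥` (as forms).  Then every special
sequence `(f_n, z_n)` for `H` associated to `(I', C)` with `E_I(H) f_n = f_n` for all `n`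
has mass zero. -/
theorem stmt_19 {ℋ : Type*} [NormedAddCommGroup ℋ] [InnerProductSpace ℂ ℋ] [CompleteSpace ℋ]
    (H : ℋ →ₗ.[ℂ] ℋ) (hH : IsSelfAdjoint H)
    (I I' : Set ℝ) (hI : IsOpen I) (hI' : IsClosed I') (hII' : I' ⊆ I)
    -- `E = E_I(H)` and `P⊥ = 1 - P`, commuting orthogonal projections
    (E Pperp : ℋ →L[ℂ] ℋ)
    (hEsa : IsSelfAdjoint E) (hEidem : E ∘L E = E)
    (hPsa : IsSelfAdjoint Pperp) (hPidem : Pperp ∘L Pperp = Pperp)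
    (hEP : E ∘L Pperp = Pperp ∘L E)
    (B C : ℋ →L[ℂ] ℋ) (hBsa : IsSelfAdjoint B)
    (hCsa : IsSelfAdjoint C) (hCinj : Function.Injective C)
    (B₁ : ℋ →L[ℂ] ℋ) (hB₁ : ∀ x, B₁ (C x) = C (B x))
    -- strict weighted projected Mourre estimate `P⊥ E [H, iB] E P⊥ ≥ P⊥ E C² E P⊥`
    (hMourre : ∀ u : H.domain, E u = (u : ℋ) → Pperp u = (u : ℋ) →
        ‖C u‖ ^ 2 ≤ (Complex.I * (⟪H u, B u⟫_ℂ - ⟪B u, H u⟫_ℂ)).re)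
    -- a special sequence for `H` associated to `(I', C)`, localized by `E_I(H)`
    (f : ℕ → H.domain) (z : ℕ → ℂ) (g : ℕ → ℋ) (η : ℝ) (hη : 0 ≤ η)
    (hzre : ∀ n, (z n).re ∈ I') (hzim : ∀ n, (z n).im ≠ 0)
    (hzlim : Filter.Tendsto (fun n => (z n).im) Filter.atTop (𝓝 0))
    (hPf : ∀ n, Pperp (f n) = (f n : ℋ))
    (hEf : ∀ n, E (f n) = (f n : ℋ))
    (hg : ∀ n, C (g n) = H (f n) - z n • (f n : ℋ))
    (hglim : Filter.Tendsto (fun n => ‖g n‖) Filter.atTop (𝓝 0))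
    (hmass : Filter.Tendsto (fun n => ‖C (f n)‖) Filter.atTop (𝓝 η)) :
    η = 0 :=
  stmt_19_general H hH E Pperp B C hBsa hCsa B₁ hB₁ hMourre f z g η hPf hEf hg hglim hmass
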